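/- Let m ≥ 2 and let G be a graph containing no cycle of length 2m+1. If some vertex v of G has degree d(v) ≥ D, then α(G) ≥ D/(2m−1). -/

import Mathlib

open SimpleGraph

/-- `H` is contained in `G` as a subgraph (there is an injective adjacency-preserving map). -/
def ContainsCopy {α β : Type*} (H : SimpleGraph α) (G : SimpleGraph β) : Prop :=
  ∃ f : α ↪ β, ∀ u v, H.Adj u v → G.Adj (f u) (f v)

/-- The `k`-edge-coloring `c` of the complete graph on `Fin N` contains a monochromatic copy of `H`. -/
def HasMonoCopy {α : Type*} (H : SimpleGraph α) {N k : ℕ}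
    (c : Sym2 (Fin N) → Fin k) : Prop :=
  ∃ i : Fin k, ∃ f : α ↪ Fin N, ∀ u v, H.Adj u v → c s(f u, f v) = i

/-- The multicolor Ramsey number `r_k(H)`: the least `N` such that every `k`-coloring of the
edges of `K_N` contains a monochromatic copy of `H`. -/
noncomputable def multiRamsey {α : Type*} (H : SimpleGraph α) (k : ℕ) : ℕ :=
  sInf {N | ∀ c : Sym2 (Fin N) → Fin k, HasMonoCopy H c}

/-- The graph on `Fin N` formed by the edges of color `i`. -/
def colorGraph {N k : ℕ} (c : Sym2 (Fin N) → Fin k) (i : Fin k) : SimpleGraph (Fin N) where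
  Adj u v := u ≠ v ∧ c s(u, v) = i
  symm := ⟨by
    intro u v h
    exact ⟨h.1.symm, by rw [Sym2.eq_swap]; exact h.2⟩⟩
  loopless := ⟨fun u h => h.1 rfl⟩

/-- The independence number of a graph. -/
noncomputable def indepNum {V : Type*} (G : SimpleGraph V) : ℕ :=
  sSup {n | ∃ s : Finset V, s.card = n ∧ ∀ u ∈ s, ∀ v ∈ s, ¬ G.Adj u v}

/-!
A longest path inside a vertex set `s` ends at a vertex whose neighbours in `s` all lie on the
path, so if `s` contains no path of length `k`, every nonempty subset of `s` has a vertex with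
fewer than `k` neighbours inside it. Greedily picking such a vertex and deleting its closed
neighbourhood yields an independent subset of `s` of size at least `#s / k` (Chvátal's bound
`r(P_{k+1}, K_n) ≤ k(n-1)+1`). For `s` the neighbourhood of `v`, a path of length `2m-1` in `s`
closes up through `v` to a cycle of length `2m+1`, so when `G` has no such cycle we may take
`k = 2m-1`.
-/

open Finset

theorem indepNum_eq_indepNum {V : Type*} (G : SimpleGraph V) : _root_.indepNum G = G.indepNum := by
  simp only [_root_.indepNum, SimpleGraph.indepNum, SimpleGraph.isNIndepSet_iff,
    SimpleGraph.isIndepSet_iff, Set.Pairwise, mem_coe]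
  congr 1
  ext n
  exact exists_congr fun s => ⟨fun ⟨hn, hs⟩ => ⟨fun u hu w hw _ => hs u hu w hw, hn⟩,
    fun ⟨hs, hn⟩ => ⟨hn, fun u hu w hw huw => hs hu hw (G.ne_of_adj huw) huw⟩⟩

theorem SimpleGraph.IsContained.containsCopy {α β : Type*} {H : SimpleGraph α}
    {G : SimpleGraph β} (h : H ⊑ G) : ContainsCopy H G :=
  let ⟨c⟩ := h
  ⟨c.toEmbedding, fun _ _ huv => c.toHom.map_adj huv⟩

namespace SimpleGraph

variable {V : Type*} {G : SimpleGraph V}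

theorem exists_isIndepSet_subset_card_le_mul_of_degenerate [DecidableEq V] [DecidableRel G.Adj]
    (d : ℕ) (s : Finset V) (h : ∀ t ⊆ s, t.Nonempty → ∃ u ∈ t, #{w ∈ t | G.Adj u w} < d) :
    ∃ I ⊆ s, G.IsIndepSet (I : Set V) ∧ #s ≤ d * #I := by
  induction s using Finset.strongInduction with
  | H s ih =>
  rcases s.eq_empty_or_nonempty with rfl | hne
  · exact ⟨∅, subset_rfl, by simp, by simp⟩
  obtain ⟨u, hu, hdeg⟩ := h s subset_rfl hne
  set N := insert u {w ∈ s | G.Adj u w}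
  have hNs : N ⊆ s := insert_subset hu (filter_subset _ _)
  obtain ⟨I, hIs, hI, hIcard⟩ := ih (s \ N) (sdiff_ssubset hNs (insert_nonempty _ _))
    fun t ht => h t (ht.trans sdiff_subset)
  have huI : u ∉ I := fun huI => (mem_sdiff.1 (hIs huI)).2 (mem_insert_self _ _)
  refine ⟨insert u I, insert_subset hu (hIs.trans sdiff_subset), ?_, ?_⟩
  · rw [coe_insert, isIndepSet_iff, Set.pairwise_insert]
    refine ⟨hI, fun w hw _ => ?_⟩
    obtain ⟨hws, hwN⟩ := mem_sdiff.1 (hIs hw)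
    exact ⟨fun huw => hwN (mem_insert_of_mem (mem_filter.2 ⟨hws, huw⟩)),
      fun hwu => hwN (mem_insert_of_mem (mem_filter.2 ⟨hws, hwu.symm⟩))⟩
  · calc #s = #(s \ N) + #N := (card_sdiff_add_card_eq_card hNs).symm
      _ ≤ d * #I + d := add_le_add hIcard ((card_insert_le _ _).trans hdeg)
      _ = d * #(insert u I) := by rw [card_insert_of_notMem huI]; ring

theorem exists_isPath_forall_adj_mem_support [Fintype V] {s : Finset V} (hs : s.Nonempty) :
    ∃ (a u : V) (p : G.Walk a u), p.IsPath ∧ (∀ x ∈ p.support, x ∈ s) ∧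
      ∀ w ∈ s, G.Adj u w → w ∈ p.support := by
  classical
  let P (l : ℕ) : Prop :=
    ∃ (a u : V) (p : G.Walk a u), p.IsPath ∧ (∀ x ∈ p.support, x ∈ s) ∧ p.length = l
  obtain ⟨x, hx⟩ := hs
  have hP0 : P 0 := ⟨x, x, .nil, .nil, by simpa using hx, rfl⟩
  obtain ⟨a, u, p, hp, hps, hlen⟩ : P (Nat.findGreatest P (Fintype.card V)) :=
    Nat.findGreatest_spec (Nat.zero_le _) hP0
  refine ⟨a, u, p, hp, hps, fun w hw huw => ?_⟩
  -- otherwise `p` extends to a longer path in `s`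
  by_contra hwp
  have hq : (p.concat huw).IsPath := hp.concat hwp huw
  have hqs : ∀ y ∈ (p.concat huw).support, y ∈ s := fun y hy => by
    simp only [Walk.support_concat, List.mem_append, List.mem_singleton] at hy
    rcases hy with hy | rfl
    exacts [hps y hy, hw]
  have hqlen : (p.concat huw).length = Nat.findGreatest P (Fintype.card V) + 1 := by
    rw [Walk.length_concat, hlen]
  exact Nat.findGreatest_is_greatest (Nat.lt_succ_self _) (hqlen ▸ hq.length_lt).le
    ⟨a, w, p.concat huw, hq, hqs, hqlen⟩

theorem exists_isIndepSet_subset_card_le_mul_of_isPath_length_lt [Fintype V]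
    (k : ℕ) (s : Finset V)
    (h : ∀ (a b : V) (p : G.Walk a b), p.IsPath → (∀ x ∈ p.support, x ∈ s) → p.length < k) :
    ∃ I ⊆ s, G.IsIndepSet (I : Set V) ∧ #s ≤ k * #I := by
  classical
  refine exists_isIndepSet_subset_card_le_mul_of_degenerate k s fun t hts ht => ?_
  obtain ⟨a, u, p, hp, hpt, hnbr⟩ := exists_isPath_forall_adj_mem_support (G := G) ht
  have hu : u ∈ p.support := p.end_mem_support
  refine ⟨u, hpt u hu, ?_⟩
  have hsub : {w ∈ t | G.Adj u w} ⊆ p.support.toFinset.erase u := fun w hw => by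
    obtain ⟨hwt, huw⟩ := mem_filter.1 hw
    exact mem_erase.2 ⟨G.ne_of_adj huw |>.symm, List.mem_toFinset.2 (hnbr w hwt huw)⟩
  calc #{w ∈ t | G.Adj u w} < #(p.support.toFinset.erase u) + 1 :=
        Nat.lt_succ_of_le (card_le_card hsub)
    _ = #p.support.toFinset := card_erase_add_one (List.mem_toFinset.2 hu)
    _ ≤ p.support.length := p.support.toFinset_card_le
    _ = p.length + 1 := p.length_support
    _ ≤ k := h a u p hp fun x hx => hts (hpt x hx)

theorem cycleGraph_isContained_of_isPath_of_forall_adj {v a b : V} {p : G.Walk a b}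
    (hp : p.IsPath) (hlen : 0 < p.length) (hpv : ∀ x ∈ p.support, G.Adj v x) :
    cycleGraph (p.length + 2) ⊑ G := by
  have hvp : v ∉ p.support := fun hv => G.loopless.irrefl v (hpv v hv)
  have hab : a ≠ b := hp.nil_iff_eq.not.1 (Walk.not_nil_iff_lt_length.2 hlen)
  have hb := (hpv b p.end_mem_support).symm
  rw [cycleGraph_isContained_iff (by omega)]
  refine ⟨v, .cons (hpv a p.start_mem_support) (p.concat hb), ?_, by simp⟩
  refine (Walk.cons_isCycle_iff _ _).2 ⟨hp.concat hvp hb, ?_⟩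
  rw [Walk.edges_concat, List.concat_eq_append, List.mem_append, List.mem_singleton, not_or]
  refine ⟨fun he => hvp (p.fst_mem_support_of_mem_edges he), fun he => ?_⟩
  rcases Sym2.eq_iff.1 he with ⟨rfl, -⟩ | ⟨-, rfl⟩
  exacts [hvp p.end_mem_support, hab rfl]

theorem isPath_length_lt_of_not_cycleGraph_isContained [Fintype V] [DecidableRel G.Adj]
    {ℓ : ℕ} (hℓ : 0 < ℓ) (hG : ¬ cycleGraph (ℓ + 2) ⊑ G) (v a b : V) (p : G.Walk a b)
    (hp : p.IsPath) (hpv : ∀ x ∈ p.support, x ∈ G.neighborFinset v) : p.length < ℓ := by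
  by_contra! hℓp
  have hq : (p.take ℓ).length = ℓ := by simp [hℓp]
  have hpv' : ∀ x ∈ (p.take ℓ).support, G.Adj v x := fun x hx => by
    rw [Walk.support_take] at hx
    exact (mem_neighborFinset G v x).1 (hpv x (List.take_subset _ _ hx))
  have := cycleGraph_isContained_of_isPath_of_forall_adj (hp.take ℓ) (by omega) hpv'
  exact hG (hq ▸ this)

end SimpleGraph

theorem stmt7 (m : ℕ) (hm : 2 ≤ m) {V : Type*} [Fintype V]
    (G : SimpleGraph V) [DecidableRel G.Adj]
    (hG : ¬ ContainsCopy (cycleGraph (2 * m + 1)) G)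
    (v : V) (D : ℕ) (hv : D ≤ G.degree v) :
    (D : ℝ) / (2 * (m : ℝ) - 1) ≤ (_root_.indepNum G : ℝ) := by
  have hcycle : ¬ cycleGraph (2 * m - 1 + 2) ⊑ G := by
    rw [show 2 * m - 1 + 2 = 2 * m + 1 by omega]
    exact fun h => hG h.containsCopy
  obtain ⟨I, -, hI, hcard⟩ := exists_isIndepSet_subset_card_le_mul_of_isPath_length_lt
    (2 * m - 1) (G.neighborFinset v)
    (isPath_length_lt_of_not_cycleGraph_isContained (by omega) hcycle v)
  have hD : D ≤ (2 * m - 1) * _root_.indepNum G := calc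
    D ≤ #(G.neighborFinset v) := by rwa [card_neighborFinset_eq_degree]
    _ ≤ (2 * m - 1) * #I := hcard
    _ ≤ (2 * m - 1) * _root_.indepNum G := by
      rw [indepNum_eq_indepNum]
      exact Nat.mul_le_mul_left _ hI.card_le_indepNum
  have hm1 : (1 : ℝ) ≤ m := by exact_mod_cast (by omega : 1 ≤ m)
  rw [div_le_iff₀ (by linarith)]
  have hcast : ((2 * m - 1 : ℕ) : ℝ) = 2 * m - 1 := by
    push_cast [show 1 ≤ 2 * m by omega]; ring
  rw [mul_comm, ← hcast]
  exact_mod_cast hD
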